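/- arXiv:1711.08364 — 5 statements merged into one kernel-verified Lean document; each statement's English description precedes it below -/
import Mathlib

section
/- For matrices A ∈ ℝ^{m×p} and B ∈ ℝ^{m×q}, the nuclear norm of their column-wise concatenation [A, B] satisfies ‖[A, B]‖_* ≤ ‖A‖_* + ‖B‖_*. -/
open Matrix

/-- The nuclear norm of a real matrix: the sum of its singular values,
i.e. the sum of the square roots of the eigenvalues of `Aᴴ * A`. -/
noncomputable def nuclearNorm {m n : Type*} [Fintype m] [Fintype n] [DecidableEq n]
    (A : Matrix m n ℝ) : ℝ :=
  ∑ i, Real.sqrt ((Matrix.isHermitian_conjTranspose_mul_self A).eigenvalues i)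

/-!
Both inequalities come from a variational description of the nuclear norm. For any two
families `u`, `x` of vectors satisfying Bessel's inequality, `∑ i, ⟪u i, A x i⟫ ≤ ‖A‖_*`:
expand each `x i` in an orthonormal eigenbasis `v` of `Aᴴ A` and apply Cauchy–Schwarz in `i`
for each `v j`, using `‖A v j‖ = σ j`. The bound is attained by `v` itself together with
`u j = σ j⁻¹ • A v j`, an orthogonal family of vectors of norm at most one. Taking these
families for `M = [A, B]`, the blocks of the vectors `v j` are again Bessel families, and
`⟪u j, M v j⟫` splits into a pairing against `A` plus one against `B`.
-/

open Finset

variable {ι κ m n : Type*} [Fintype ι] [Fintype κ] [Fintype m] [Fintype n]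

def IsBesselFamily (u : ι → n → ℝ) : Prop :=
  ∀ a : n → ℝ, ∑ i, (a ⬝ᵥ u i) ^ 2 ≤ a ⬝ᵥ a

namespace IsBesselFamily

theorem of_orthogonal {u : ι → n → ℝ} (horth : Pairwise fun i j ↦ u i ⬝ᵥ u j = 0)
    (hnorm : ∀ i, u i ⬝ᵥ u i ≤ 1) : IsBesselFamily u := by
  intro a
  set t : ι → ℝ := fun i ↦ a ⬝ᵥ u i
  set s : n → ℝ := ∑ i, t i • u i
  have has : a ⬝ᵥ s = ∑ i, t i ^ 2 := by
    simp only [s, dotProduct_sum, dotProduct_smul, smul_eq_mul, sq, t]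
  have hss : s ⬝ᵥ s ≤ ∑ i, t i ^ 2 := by
    have hus : ∀ i, u i ⬝ᵥ s = t i * (u i ⬝ᵥ u i) := fun i ↦ by
      simp only [s, dotProduct_sum, dotProduct_smul, smul_eq_mul]
      exact Fintype.sum_eq_single i fun j hj ↦ by rw [horth hj.symm, mul_zero]
    calc s ⬝ᵥ s = ∑ i, t i ^ 2 * (u i ⬝ᵥ u i) := by
          simp only [s, sum_dotProduct, smul_dotProduct, hus, smul_eq_mul, sq, mul_assoc]
      _ ≤ ∑ i, t i ^ 2 := sum_le_sum fun i _ ↦ mul_le_of_le_one_right (sq_nonneg _) (hnorm i)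
  -- `s` is the expansion of `a` along the `u i`; expand `0 ≤ ‖a - s‖²`.
  have h0 : 0 ≤ (a - s) ⬝ᵥ (a - s) := sum_nonneg fun k _ ↦ mul_self_nonneg _
  rw [sub_dotProduct, dotProduct_sub, dotProduct_sub, dotProduct_comm s a] at h0
  linarith

theorem comp_inl {p q : Type*} [Fintype p] [Fintype q] {v : ι → p ⊕ q → ℝ}
    (hv : IsBesselFamily v) : IsBesselFamily fun i ↦ v i ∘ Sum.inl := by
  intro a
  have hdot (w : p ⊕ q → ℝ) : a ⬝ᵥ (w ∘ Sum.inl) = Sum.elim a 0 ⬝ᵥ w := by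
    rw [← Sum.elim_comp_inl_inr w, sumElim_dotProduct_sumElim, zero_dotProduct, add_zero]; rfl
  simpa only [hdot, sumElim_dotProduct_sumElim, zero_dotProduct, add_zero] using hv (Sum.elim a 0)

theorem comp_inr {p q : Type*} [Fintype p] [Fintype q] {v : ι → p ⊕ q → ℝ}
    (hv : IsBesselFamily v) : IsBesselFamily fun i ↦ v i ∘ Sum.inr := by
  intro a
  have hdot (w : p ⊕ q → ℝ) : a ⬝ᵥ (w ∘ Sum.inr) = Sum.elim 0 a ⬝ᵥ w := by
    rw [← Sum.elim_comp_inl_inr w, sumElim_dotProduct_sumElim, zero_dotProduct, zero_add]; rfl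
  simpa only [hdot, sumElim_dotProduct_sumElim, zero_dotProduct, zero_add] using hv (Sum.elim 0 a)

end IsBesselFamily

namespace OrthonormalBasis

variable (b : OrthonormalBasis κ ℝ (EuclideanSpace ℝ n))

theorem sum_dotProduct_mul_dotProduct (y z : n → ℝ) :
    ∑ j, (y ⬝ᵥ b j) * (b j ⬝ᵥ z) = y ⬝ᵥ z := by
  simpa only [EuclideanSpace.inner_eq_star_dotProduct, star_trivial, dotProduct_comm, mul_comm]
    using b.sum_inner_mul_inner (WithLp.toLp 2 z) (WithLp.toLp 2 y)

theorem dotProduct_eq_ite [DecidableEq κ] (i j : κ) :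
    (b i : n → ℝ) ⬝ᵥ b j = if i = j then 1 else 0 := by
  simpa only [EuclideanSpace.inner_eq_star_dotProduct, star_trivial, dotProduct_comm]
    using orthonormal_iff_ite.mp b.orthonormal i j

theorem isBesselFamily : IsBesselFamily fun j ↦ (b j : n → ℝ) := fun a ↦ le_of_eq <| by
  simpa only [sq, dotProduct_comm (b _) a] using b.sum_dotProduct_mul_dotProduct a a

end OrthonormalBasis

namespace Matrix

variable [DecidableEq n] (A : Matrix m n ℝ)

noncomputable def rightSingularVector (j : n) : n → ℝ :=
  (isHermitian_conjTranspose_mul_self A).eigenvectorBasis j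

noncomputable def singularValue (j : n) : ℝ :=
  √((isHermitian_conjTranspose_mul_self A).eigenvalues j)

theorem nuclearNorm_eq_sum_singularValue : nuclearNorm A = ∑ j, A.singularValue j := rfl

theorem singularValue_nonneg (j : n) : 0 ≤ A.singularValue j := Real.sqrt_nonneg _

theorem conjTranspose_mul_self_mulVec_rightSingularVector (j : n) :
    (Aᴴ * A) *ᵥ A.rightSingularVector j = A.singularValue j ^ 2 • A.rightSingularVector j := by
  rw [singularValue, Real.sq_sqrt (eigenvalues_conjTranspose_mul_self_nonneg A j)]
  exact (isHermitian_conjTranspose_mul_self A).mulVec_eigenvectorBasis j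

theorem rightSingularVector_dotProduct (i j : n) :
    A.rightSingularVector i ⬝ᵥ A.rightSingularVector j = if i = j then 1 else 0 :=
  OrthonormalBasis.dotProduct_eq_ite _ i j

theorem sum_dotProduct_rightSingularVector_mul (y z : n → ℝ) :
    ∑ j, (y ⬝ᵥ A.rightSingularVector j) * (A.rightSingularVector j ⬝ᵥ z) = y ⬝ᵥ z :=
  OrthonormalBasis.sum_dotProduct_mul_dotProduct _ y z

theorem isBesselFamily_rightSingularVector : IsBesselFamily A.rightSingularVector :=
  OrthonormalBasis.isBesselFamily _

theorem mulVec_rightSingularVector_dotProduct (i j : n) :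
    (A *ᵥ A.rightSingularVector i) ⬝ᵥ (A *ᵥ A.rightSingularVector j) =
      if i = j then A.singularValue j ^ 2 else 0 := by
  rw [dotProduct_mulVec, vecMul_mulVec, ← dotProduct_mulVec,
    ← conjTranspose_eq_transpose_of_trivial, conjTranspose_mul_self_mulVec_rightSingularVector,
    dotProduct_smul, rightSingularVector_dotProduct, smul_eq_mul, mul_ite, mul_one, mul_zero]

theorem sum_dotProduct_mulVec_le_nuclearNorm {u : ι → m → ℝ} {x : ι → n → ℝ}
    (hu : IsBesselFamily u) (hx : IsBesselFamily x) :
    ∑ i, u i ⬝ᵥ (A *ᵥ x i) ≤ nuclearNorm A := by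
  set v := A.rightSingularVector
  have hexpand (i : ι) : u i ⬝ᵥ (A *ᵥ x i) = ∑ j, (v j ⬝ᵥ x i) * ((A *ᵥ v j) ⬝ᵥ u i) := by
    rw [dotProduct_mulVec, ← A.sum_dotProduct_rightSingularVector_mul]
    refine sum_congr rfl fun j _ ↦ ?_
    rw [← dotProduct_mulVec, dotProduct_comm (u i), mul_comm]
  have hbound (j : n) : ∑ i, (v j ⬝ᵥ x i) * ((A *ᵥ v j) ⬝ᵥ u i) ≤ A.singularValue j := by
    have hv : v j ⬝ᵥ v j = 1 := by simpa using A.rightSingularVector_dotProduct j j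
    have hAv : (A *ᵥ v j) ⬝ᵥ (A *ᵥ v j) = A.singularValue j ^ 2 := by
      simpa using A.mulVec_rightSingularVector_dotProduct j j
    calc ∑ i, (v j ⬝ᵥ x i) * ((A *ᵥ v j) ⬝ᵥ u i)
        ≤ √(∑ i, (v j ⬝ᵥ x i) ^ 2) * √(∑ i, ((A *ᵥ v j) ⬝ᵥ u i) ^ 2) :=
          Real.sum_mul_le_sqrt_mul_sqrt _ _ _
      _ ≤ √1 * √(A.singularValue j ^ 2) := by
          gcongr
          · exact hv ▸ hx (v j)
          · exact hAv ▸ hu (A *ᵥ v j)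
      _ = A.singularValue j := by
          rw [Real.sqrt_one, one_mul, Real.sqrt_sq (A.singularValue_nonneg j)]
  calc ∑ i, u i ⬝ᵥ (A *ᵥ x i) = ∑ j, ∑ i, (v j ⬝ᵥ x i) * ((A *ᵥ v j) ⬝ᵥ u i) := by
        simp only [hexpand]; exact sum_comm
    _ ≤ ∑ j, A.singularValue j := sum_le_sum fun j _ ↦ hbound j
    _ = nuclearNorm A := (A.nuclearNorm_eq_sum_singularValue).symm

theorem exists_isBesselFamily_nuclearNorm_eq :
    ∃ (u : n → m → ℝ) (v : n → n → ℝ), IsBesselFamily u ∧ IsBesselFamily v ∧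
      nuclearNorm A = ∑ i, u i ⬝ᵥ (A *ᵥ v i) := by
  set σ := A.singularValue
  set v := A.rightSingularVector
  have hdot (i j : n) : ((σ i)⁻¹ • (A *ᵥ v i)) ⬝ᵥ (A *ᵥ v j) = if i = j then σ i else 0 := by
    rw [smul_dotProduct, mulVec_rightSingularVector_dotProduct, smul_eq_mul, mul_ite, mul_zero]
    split_ifs with hij
    · rw [← hij, sq, ← mul_assoc, inv_mul_mul_self]
    · rfl
  refine ⟨fun i ↦ (σ i)⁻¹ • (A *ᵥ v i), v, ?_, A.isBesselFamily_rightSingularVector, ?_⟩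
  · refine IsBesselFamily.of_orthogonal (fun i j hij ↦ ?_) fun i ↦ ?_
    · simp only [dotProduct_smul, hdot, if_neg hij, smul_zero]
    · simp only [dotProduct_smul, hdot, ↓reduceIte, smul_eq_mul]
      exact inv_mul_le_one_of_le₀ le_rfl (A.singularValue_nonneg i)
  · simp only [nuclearNorm_eq_sum_singularValue, hdot, ↓reduceIte, σ]

end Matrix

theorem nuclearNorm_fromColumns_le {m p q : ℕ}
    (A : Matrix (Fin m) (Fin p) ℝ) (B : Matrix (Fin m) (Fin q) ℝ) :
    nuclearNorm (Matrix.fromCols A B) ≤ nuclearNorm A + nuclearNorm B := by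
  obtain ⟨u, v, hu, hv, hnorm⟩ := (fromCols A B).exists_isBesselFamily_nuclearNorm_eq
  calc nuclearNorm (fromCols A B)
      = ∑ i, u i ⬝ᵥ (A *ᵥ (v i ∘ Sum.inl)) + ∑ i, u i ⬝ᵥ (B *ᵥ (v i ∘ Sum.inr)) := by
        rw [hnorm, ← sum_add_distrib]
        simp only [fromCols_mulVec, dotProduct_add]
    _ ≤ nuclearNorm A + nuclearNorm B :=
        add_le_add (A.sum_dotProduct_mulVec_le_nuclearNorm hu hv.comp_inl)
          (B.sum_dotProduct_mulVec_le_nuclearNorm hu hv.comp_inr)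
end

section
/- If A ∈ ℝ^{m×p} and B ∈ ℝ^{m×q} have orthogonal column spaces (i.e., AᵀB = 0), then ‖[A, B]‖_* = ‖A‖_* + ‖B‖_*. -/
/-!
The nuclear norm of `M` is the trace of `√(Mᴴ M)`. When `Aᵀ B = 0` the Gram matrix of `[A, B]` is
block diagonal with blocks `Aᵀ A` and `Bᵀ B`, and the square root of a block-diagonal positive
semidefinite matrix is the block-diagonal matrix of the square roots, so the traces add up.
-/

open Matrix

open scoped MatrixOrder ComplexOrder

namespace Matrix

variable {𝕜 α : Type*} [RCLike 𝕜] {m n₁ n₂ : Type*}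

theorem IsHermitian.trace_cfc [Fintype n₁] [DecidableEq n₁] {A : Matrix n₁ n₁ 𝕜}
    (hA : A.IsHermitian) (f : ℝ → ℝ) :
    (cfc f A).trace = ∑ i, (f (hA.eigenvalues i) : 𝕜) := by
  rw [hA.cfc_eq, IsHermitian.cfc, Unitary.conjStarAlgAut_apply, trace_mul_cycle,
    Unitary.coe_star_mul_self, one_mul, trace_diagonal]
  rfl

theorem trace_fromBlocks [Fintype n₁] [Fintype n₂] [AddCommMonoid α] (A : Matrix n₁ n₁ α)
    (B : Matrix n₁ n₂ α) (C : Matrix n₂ n₁ α) (D : Matrix n₂ n₂ α) :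
    (fromBlocks A B C D).trace = A.trace + D.trace :=
  Fintype.sum_sum_type _

theorem conjTranspose_fromCols_mul_fromCols [Fintype m] [Semiring α] [StarRing α]
    {A : Matrix m n₁ α} {B : Matrix m n₂ α} (h : Aᴴ * B = 0) :
    (fromCols A B)ᴴ * fromCols A B = fromBlocks (Aᴴ * A) 0 0 (Bᴴ * B) := by
  have h' : Bᴴ * A = 0 := by
    rw [← conjTranspose_conjTranspose (Bᴴ * A), conjTranspose_mul, conjTranspose_conjTranspose,
      h, conjTranspose_zero]
  rw [conjTranspose_fromCols_eq_fromRows_conjTranspose, fromRows_mul_fromCols, h, h']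

theorem PosSemidef.fromBlocks_zero [Fintype n₁] [Fintype n₂] {A : Matrix n₁ n₁ 𝕜}
    {D : Matrix n₂ n₂ 𝕜} (hA : A.PosSemidef) (hD : D.PosSemidef) :
    (fromBlocks A 0 0 D).PosSemidef := by
  classical
  obtain ⟨X, rfl⟩ := CStarAlgebra.nonneg_iff_eq_star_mul_self.mp hA.nonneg
  obtain ⟨Y, rfl⟩ := CStarAlgebra.nonneg_iff_eq_star_mul_self.mp hD.nonneg
  simpa [fromBlocks_conjTranspose, fromBlocks_multiply, star_eq_conjTranspose] using
    posSemidef_conjTranspose_mul_self (fromBlocks X 0 0 Y)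

theorem sqrt_fromBlocks_zero [Fintype n₁] [Fintype n₂] [DecidableEq n₁] [DecidableEq n₂]
    {A : Matrix n₁ n₁ 𝕜} {D : Matrix n₂ n₂ 𝕜} (hA : A.PosSemidef) (hD : D.PosSemidef) :
    CFC.sqrt (fromBlocks A 0 0 D) = fromBlocks (CFC.sqrt A) 0 0 (CFC.sqrt D) := by
  have hsqrt : (fromBlocks (CFC.sqrt A) 0 0 (CFC.sqrt D)).PosSemidef :=
    .fromBlocks_zero (CFC.sqrt_nonneg A).posSemidef (CFC.sqrt_nonneg D).posSemidef
  rw [CFC.sqrt_eq_iff _ _ (hA.fromBlocks_zero hD).nonneg hsqrt.nonneg, fromBlocks_multiply]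
  simp [CFC.sqrt_mul_sqrt_self _ hA.nonneg, CFC.sqrt_mul_sqrt_self _ hD.nonneg]

end Matrix

theorem nuclearNorm_eq_trace_sqrt {m n : Type*} [Fintype m] [Fintype n] [DecidableEq n]
    (A : Matrix m n ℝ) : nuclearNorm A = (CFC.sqrt (Aᴴ * A)).trace := by
  rw [CFC.sqrt_eq_real_sqrt _ (posSemidef_conjTranspose_mul_self A).nonneg, cfcₙ_eq_cfc,
    (isHermitian_conjTranspose_mul_self A).trace_cfc]
  rfl

theorem nuclearNorm_fromColumns_of_orthogonal {m p q : ℕ}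
    (A : Matrix (Fin m) (Fin p) ℝ) (B : Matrix (Fin m) (Fin q) ℝ)
    (h : Aᵀ * B = 0) :
    nuclearNorm (Matrix.fromCols A B) = nuclearNorm A + nuclearNorm B := by
  have hAB : Aᴴ * B = 0 := by simpa using h
  rw [nuclearNorm_eq_trace_sqrt, nuclearNorm_eq_trace_sqrt, nuclearNorm_eq_trace_sqrt,
    conjTranspose_fromCols_mul_fromCols hAB,
    sqrt_fromBlocks_zero (posSemidef_conjTranspose_mul_self A)
      (posSemidef_conjTranspose_mul_self B), trace_fromBlocks]
end

section
/- If A = U Σ Vᵀ is a (thin) singular value decomposition of A with all singular values strictly positive, then the matrix U Vᵀ is a subgradient of the nuclear norm at A; that is, for all matrices B of the same size, ‖B‖_* ≥ ‖A‖_* + ⟨U Vᵀ, B − A⟩, where ⟨X, Y⟩ = trace(XᵀY). -/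
open Matrix

/-!
The nuclear norm is the dual of the spectral norm: `⟨X, B⟩ ≤ ‖X‖ ‖B‖_*`, as one sees by
evaluating the trace in an orthonormal eigenbasis `(w_j)` of `BᵀB`, where `‖B w_j‖ = √λ_j`, and
the bound is attained by the contraction `X` sending `w_j` to `B w_j / ‖B w_j‖`. For
`A = U Σ Vᵀ` duality gives `‖A‖_* ≤ Σ σ_i = ⟨U Vᵀ, A⟩ ≤ ‖A‖_*`, since `⟨X, A⟩` is a combination
of the `σ_i` with coefficients `⟨X v_i, u_i⟩ ≤ ‖X‖`. So `⟨U Vᵀ, ·⟩` is a linear minorant of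
`‖·‖_*` that is exact at `A`.
-/

open scoped Matrix.Norms.L2Operator InnerProductSpace

namespace Matrix

variable {m n r : Type*} [Fintype m] [Fintype n] [Fintype r]

lemma norm_toEuclideanLin_le [DecidableEq n] (X : Matrix m n ℝ) (v : EuclideanSpace ℝ n) :
    ‖toEuclideanLin X v‖ ≤ ‖X‖ * ‖v‖ :=
  (LinearMap.toContinuousLinearMap (toEuclideanLin X)).le_opNorm v

lemma l2_opNorm_transpose [DecidableEq m] [DecidableEq n] (X : Matrix m n ℝ) : ‖Xᵀ‖ = ‖X‖ := by
  rw [← conjTranspose_eq_transpose_of_trivial, l2_opNorm_conjTranspose]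

lemma l2_opNorm_le_one_of_transpose_mul_self_eq_one [DecidableEq r] {P : Matrix m r ℝ}
    (hP : Pᵀ * P = 1) : ‖P‖ ≤ 1 := by
  have h : ‖P‖ * ‖P‖ ≤ 1 := by
    rw [← l2_opNorm_conjTranspose_mul_self, conjTranspose_eq_transpose_of_trivial, hP,
      ← diagonal_one, l2_opNorm_diagonal]
    exact pi_norm_le_iff_of_nonneg zero_le_one |>.mpr fun _ => by simp
  nlinarith [norm_nonneg P]

lemma l2_opNorm_mul_transpose_le_one [DecidableEq m] [DecidableEq n] [DecidableEq r]
    {P : Matrix m r ℝ} {Q : Matrix n r ℝ} (hP : Pᵀ * P = 1) (hQ : Qᵀ * Q = 1) :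
    ‖P * Qᵀ‖ ≤ 1 :=
  calc ‖P * Qᵀ‖ ≤ ‖P‖ * ‖Qᵀ‖ := l2_opNorm_mul _ _
    _ ≤ 1 * 1 := by
      rw [l2_opNorm_transpose]
      gcongr
      exacts [l2_opNorm_le_one_of_transpose_mul_self_eq_one hP,
        l2_opNorm_le_one_of_transpose_mul_self_eq_one hQ]
    _ = 1 := one_mul 1

lemma trace_eq_sum_inner_toEuclideanLin {𝕜 ι : Type*} [RCLike 𝕜] [Fintype ι] [DecidableEq n]
    (M : Matrix n n 𝕜) (b : OrthonormalBasis ι 𝕜 (EuclideanSpace 𝕜 n)) :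
    trace M = ∑ j, ⟪b j, toEuclideanLin M (b j)⟫_𝕜 := by
  rw [← LinearMap.trace_eq_sum_inner, toEuclideanLin_eq_toLin_orthonormal, trace_toLin_eq]

lemma inner_toEuclideanLin_transpose_mul [DecidableEq n] (X B : Matrix m n ℝ)
    (v : EuclideanSpace ℝ n) :
    ⟪v, toEuclideanLin (Xᵀ * B) v⟫_ℝ = ⟪toEuclideanLin X v, toEuclideanLin B v⟫_ℝ := by
  simp [EuclideanSpace.inner_eq_star_dotProduct, toLpLin_apply, ← mulVec_mulVec,
    dotProduct_mulVec, mulVec_transpose]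

lemma diag_le_l2_opNorm [DecidableEq n] (M : Matrix n n ℝ) (j : n) : M.diag j ≤ ‖M‖ := by
  set e : EuclideanSpace ℝ n := EuclideanSpace.single j 1
  calc M.diag j = ⟪e, toEuclideanLin M e⟫_ℝ := by
        simp [e, EuclideanSpace.inner_eq_star_dotProduct, toLpLin_apply]
    _ ≤ ‖toEuclideanLin M e‖ := by simpa [e] using real_inner_le_norm e (toEuclideanLin M e)
    _ ≤ ‖M‖ := by simpa [e] using norm_toEuclideanLin_le M e

lemma trace_mul_diagonal_le [DecidableEq n] (M : Matrix n n ℝ) {d : n → ℝ} (hd : 0 ≤ d) :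
    trace (M * diagonal d) ≤ ‖M‖ * ∑ j, d j := by
  rw [Finset.mul_sum, trace]
  simp only [diag_apply, mul_diagonal]
  exact Finset.sum_le_sum fun j _ => mul_le_mul_of_nonneg_right (diag_le_l2_opNorm M j) (hd j)

lemma trace_transpose_mul_mul_diagonal_mul_transpose_le [DecidableEq m] [DecidableEq n]
    [DecidableEq r] (X : Matrix m n ℝ) {P : Matrix m r ℝ} {Q : Matrix n r ℝ} {d : r → ℝ}
    (hP : Pᵀ * P = 1) (hQ : Qᵀ * Q = 1) (hd : 0 ≤ d) :
    trace (Xᵀ * (P * diagonal d * Qᵀ)) ≤ ‖X‖ * ∑ j, d j := by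
  have hnorm : ‖Qᵀ * Xᵀ * P‖ ≤ ‖X‖ :=
    calc ‖Qᵀ * Xᵀ * P‖ ≤ ‖Qᵀ‖ * ‖Xᵀ‖ * ‖P‖ :=
          (l2_opNorm_mul _ _).trans (by gcongr; exact l2_opNorm_mul _ _)
      _ ≤ 1 * ‖X‖ * 1 := by
          rw [l2_opNorm_transpose, l2_opNorm_transpose]
          gcongr
          exacts [l2_opNorm_le_one_of_transpose_mul_self_eq_one hQ,
            l2_opNorm_le_one_of_transpose_mul_self_eq_one hP]
      _ = ‖X‖ := by ring
  calc trace (Xᵀ * (P * diagonal d * Qᵀ)) = trace (Qᵀ * Xᵀ * P * diagonal d) := by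
        rw [← Matrix.mul_assoc, trace_mul_comm]
        simp only [Matrix.mul_assoc]
    _ ≤ ‖Qᵀ * Xᵀ * P‖ * ∑ j, d j := trace_mul_diagonal_le _ hd
    _ ≤ ‖X‖ * ∑ j, d j := by gcongr; exact Finset.sum_nonneg fun j _ => hd j

lemma trace_mul_transpose_transpose_mul_mul_diagonal_mul_transpose [DecidableEq r]
    {P : Matrix m r ℝ} {Q : Matrix n r ℝ} (d : r → ℝ) (hP : Pᵀ * P = 1) (hQ : Qᵀ * Q = 1) :
    trace ((P * Qᵀ)ᵀ * (P * diagonal d * Qᵀ)) = ∑ j, d j :=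
  calc trace ((P * Qᵀ)ᵀ * (P * diagonal d * Qᵀ)) = trace (Q * (Pᵀ * P) * diagonal d * Qᵀ) := by
        simp only [transpose_mul, transpose_transpose, Matrix.mul_assoc]
    _ = ∑ j, d j := by
        rw [hP, Matrix.mul_one, trace_mul_comm, ← Matrix.mul_assoc, hQ, Matrix.one_mul,
          trace_diagonal]

end Matrix

variable {m n r : Type*} [Fintype m] [Fintype n] [Fintype r] [DecidableEq n]

lemma nuclearNorm_nonneg (B : Matrix m n ℝ) : 0 ≤ nuclearNorm B :=
  Finset.sum_nonneg fun _ _ => Real.sqrt_nonneg _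

lemma norm_toEuclideanLin_eigenvectorBasis {B : Matrix m n ℝ} (hB : (Bᴴ * B).IsHermitian)
    (j : n) : ‖toEuclideanLin B (hB.eigenvectorBasis j)‖ = √(hB.eigenvalues j) := by
  set b := hB.eigenvectorBasis
  have heig : toEuclideanLin (Bᵀ * B) (b j) = hB.eigenvalues j • b j := by
    rw [← conjTranspose_eq_transpose_of_trivial, toLpLin_apply, hB.mulVec_eigenvectorBasis j]
    rfl
  rw [← Real.sqrt_sq (norm_nonneg _), ← real_inner_self_eq_norm_sq,
    ← inner_toEuclideanLin_transpose_mul, heig, real_inner_smul_right,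
    real_inner_self_eq_norm_sq, b.orthonormal.1 j, one_pow, mul_one]

lemma trace_transpose_mul_le_l2_opNorm_mul_nuclearNorm (X B : Matrix m n ℝ) :
    trace (Xᵀ * B) ≤ ‖X‖ * nuclearNorm B := by
  set hB := isHermitian_conjTranspose_mul_self B
  set b := hB.eigenvectorBasis
  calc trace (Xᵀ * B) = ∑ j, ⟪toEuclideanLin X (b j), toEuclideanLin B (b j)⟫_ℝ := by
        simp only [trace_eq_sum_inner_toEuclideanLin _ b, inner_toEuclideanLin_transpose_mul]
    _ ≤ ∑ j, ‖X‖ * √(hB.eigenvalues j) := by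
        refine Finset.sum_le_sum fun j _ => (real_inner_le_norm _ _).trans ?_
        rw [norm_toEuclideanLin_eigenvectorBasis]
        gcongr
        simpa [b.orthonormal.1 j] using norm_toEuclideanLin_le X (b j)
    _ = ‖X‖ * nuclearNorm B := by rw [← Finset.mul_sum]; rfl

lemma trace_transpose_mul_le_nuclearNorm {X : Matrix m n ℝ} (hX : ‖X‖ ≤ 1) (B : Matrix m n ℝ) :
    trace (Xᵀ * B) ≤ nuclearNorm B :=
  (trace_transpose_mul_le_l2_opNorm_mul_nuclearNorm X B).trans
    (mul_le_of_le_one_left (nuclearNorm_nonneg B) hX)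

lemma transpose_mul_self_mul_eigenvectorUnitary {B : Matrix m n ℝ} (hB : (Bᴴ * B).IsHermitian) :
    (B * hB.eigenvectorUnitary.1)ᵀ * (B * hB.eigenvectorUnitary.1) = diagonal hB.eigenvalues := by
  set W : Matrix n n ℝ := hB.eigenvectorUnitary.1
  have hWW : Wᵀ * W = 1 := by
    rw [← conjTranspose_eq_transpose_of_trivial, ← star_eq_conjTranspose]
    exact Unitary.coe_star_mul_self _
  have heig : Bᵀ * B * W = W * diagonal hB.eigenvalues := by
    ext i j
    rw [mul_diagonal]
    have := congrFun (hB.mulVec_eigenvectorBasis j) i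
    simpa [conjTranspose_eq_transpose_of_trivial, mulVec, dotProduct, mul_apply, W, mul_comm]
      using this
  rw [transpose_mul, Matrix.mul_assoc, ← Matrix.mul_assoc Bᵀ, heig, ← Matrix.mul_assoc, hWW,
    Matrix.one_mul]

/-- The witness is `B W diag(μ)^{-1/2} Wᵀ`; the junk value `0⁻¹ = 0` makes it vanish on the
columns of `B W` that are zero. -/
lemma exists_l2_opNorm_le_one_trace_transpose_mul_eq_sum_sqrt {B : Matrix m n ℝ}
    {W : Matrix n n ℝ} {μ : n → ℝ} (hW : W * Wᵀ = 1) (hBW : (B * W)ᵀ * (B * W) = diagonal μ) :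
    ∃ X : Matrix m n ℝ, ‖X‖ ≤ 1 ∧ trace (Xᵀ * B) = ∑ j, √(μ j) := by
  set c : n → ℝ := fun j => (√(μ j))⁻¹
  set Y := B * W * diagonal c
  have hY : ‖Y‖ ≤ 1 := by
    have hYY : Yᵀ * Y = diagonal fun j => √(μ j) / √(μ j) := calc
      Yᵀ * Y = diagonal c * ((B * W)ᵀ * (B * W)) * diagonal c := by
        simp only [Y, transpose_mul, diagonal_transpose, Matrix.mul_assoc]
      _ = _ := by
        rw [hBW, diagonal_mul_diagonal, diagonal_mul_diagonal]
        congr 1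
        funext j
        rw [← div_eq_inv_mul, Real.div_sqrt, div_eq_mul_inv]
    have h : ‖Y‖ * ‖Y‖ ≤ 1 := by
      rw [← l2_opNorm_conjTranspose_mul_self, conjTranspose_eq_transpose_of_trivial, hYY,
        l2_opNorm_diagonal]
      refine pi_norm_le_iff_of_nonneg zero_le_one |>.mpr fun j => ?_
      rw [Real.norm_of_nonneg (by positivity)]
      exact div_self_le_one _
    nlinarith [norm_nonneg Y]
  refine ⟨Y * Wᵀ, ?_, ?_⟩
  · calc ‖Y * Wᵀ‖ ≤ ‖Y‖ * ‖Wᵀ‖ := l2_opNorm_mul _ _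
      _ ≤ 1 * 1 := by
        gcongr
        exact l2_opNorm_le_one_of_transpose_mul_self_eq_one (by rwa [transpose_transpose])
      _ = 1 := one_mul 1
  · calc trace ((Y * Wᵀ)ᵀ * B) = trace (diagonal c * ((B * W)ᵀ * (B * W))) := by
          rw [transpose_mul, transpose_transpose, Matrix.mul_assoc, trace_mul_comm]
          simp only [Y, transpose_mul, diagonal_transpose, Matrix.mul_assoc]
      _ = ∑ j, √(μ j) := by
          rw [hBW, diagonal_mul_diagonal, trace_diagonal]
          exact Finset.sum_congr rfl fun j _ => by rw [← div_eq_inv_mul, Real.div_sqrt]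

lemma exists_l2_opNorm_le_one_trace_transpose_mul_eq_nuclearNorm (B : Matrix m n ℝ) :
    ∃ X : Matrix m n ℝ, ‖X‖ ≤ 1 ∧ trace (Xᵀ * B) = nuclearNorm B := by
  set hB := isHermitian_conjTranspose_mul_self B
  have hW : hB.eigenvectorUnitary.1 * hB.eigenvectorUnitary.1ᵀ = 1 := by
    rw [← conjTranspose_eq_transpose_of_trivial, ← star_eq_conjTranspose]
    exact Unitary.coe_mul_star_self _
  exact exists_l2_opNorm_le_one_trace_transpose_mul_eq_sum_sqrt hW
    (transpose_mul_self_mul_eigenvectorUnitary hB)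

lemma nuclearNorm_mul_diagonal_mul_transpose [DecidableEq m] [DecidableEq r]
    {P : Matrix m r ℝ} {Q : Matrix n r ℝ} {d : r → ℝ} (hP : Pᵀ * P = 1) (hQ : Qᵀ * Q = 1)
    (hd : 0 ≤ d) : nuclearNorm (P * diagonal d * Qᵀ) = ∑ j, d j := by
  refine le_antisymm ?_ ?_
  · obtain ⟨X, hX, hXA⟩ := exists_l2_opNorm_le_one_trace_transpose_mul_eq_nuclearNorm
      (P * diagonal d * Qᵀ)
    calc nuclearNorm (P * diagonal d * Qᵀ) = trace (Xᵀ * (P * diagonal d * Qᵀ)) := hXA.symm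
      _ ≤ ‖X‖ * ∑ j, d j := trace_transpose_mul_mul_diagonal_mul_transpose_le X hP hQ hd
      _ ≤ ∑ j, d j := mul_le_of_le_one_left (Finset.sum_nonneg fun j _ => hd j) hX
  · calc ∑ j, d j = trace ((P * Qᵀ)ᵀ * (P * diagonal d * Qᵀ)) :=
          (trace_mul_transpose_transpose_mul_mul_diagonal_mul_transpose d hP hQ).symm
      _ ≤ nuclearNorm (P * diagonal d * Qᵀ) :=
          trace_transpose_mul_le_nuclearNorm (l2_opNorm_mul_transpose_le_one hP hQ) _

/-- If A = U Σ Vᵀ is a thin SVD of A with all singular values strictly positive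
(U and V having orthonormal columns), then U Vᵀ is a subgradient of the nuclear norm
at A: for all B, ‖B‖_* ≥ ‖A‖_* + ⟨U Vᵀ, B − A⟩ with ⟨X, Y⟩ = trace(XᵀY). -/
theorem uvT_subgradient_nuclearNorm {m n r : ℕ}
    (A : Matrix (Fin m) (Fin n) ℝ)
    (U : Matrix (Fin m) (Fin r) ℝ) (V : Matrix (Fin n) (Fin r) ℝ)
    (σ : Fin r → ℝ)
    (hU : Uᵀ * U = 1) (hV : Vᵀ * V = 1)
    (hσ : ∀ i, 0 < σ i)
    (hA : A = U * Matrix.diagonal σ * Vᵀ) :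
    ∀ B : Matrix (Fin m) (Fin n) ℝ,
      nuclearNorm B ≥ nuclearNorm A + Matrix.trace ((U * Vᵀ)ᵀ * (B - A)) := by
  intro B
  have hnormA : nuclearNorm A = trace ((U * Vᵀ)ᵀ * A) := by
    rw [hA, nuclearNorm_mul_diagonal_mul_transpose hU hV fun i => (hσ i).le,
      trace_mul_transpose_transpose_mul_mul_diagonal_mul_transpose σ hU hV]
  have hB := trace_transpose_mul_le_nuclearNorm (l2_opNorm_mul_transpose_le_one hU hV) B
  rw [Matrix.mul_sub, trace_sub, ← hnormA]
  linarith
end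

section
/- Let C be a class label random variable and B a discrete random variable (hash code). The Bayes error of predicting C from B is at most (H(C) − I(B; C))/2, where H is Shannon entropy (in bits) and I mutual information. -/
/-!
Let `g b` be a most likely class given `B = b` (the MAP rule); its error given `b` is
`1 - p` where `p` is the largest conditional probability. For any distribution `w` with
largest weight `p` one has `2 (1 - p) ≤ H(w)` in bits: if `p ≤ 1/2` because
`H(w) ≥ -log₂ p`, and if `p > 1/2` because lumping all other classes together gives
`H(w) ≥ h(p)`, and the binary entropy `h` lies above its chord `2 (1 - p)` on `[1/2, 1]`
by concavity. Averaging over `b` gives `P_e ≤ H(C | B) / 2`.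
-/
open Finset

/-- Probability that the random variable `X` takes the value `a`, under the
probability mass function `μ` on the finite sample space `Ω`. -/
noncomputable def pr {Ω : Type*} [Fintype Ω] {α : Type*} [DecidableEq α]
    (μ : Ω → ℝ) (X : Ω → α) (a : α) : ℝ :=
  ∑ ω, if X ω = a then μ ω else 0

/-- Shannon entropy (base 2) of a finitely-valued random variable. -/
noncomputable def entropy {Ω : Type*} [Fintype Ω] {α : Type*} [Fintype α] [DecidableEq α]
    (μ : Ω → ℝ) (X : Ω → α) : ℝ :=
  ∑ a, -(pr μ X a * Real.logb 2 (pr μ X a))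

/-- Shannon mutual information I(X;Y) = H(X) + H(Y) − H(X,Y). -/
noncomputable def mutualInfo {Ω : Type*} [Fintype Ω]
    {α β : Type*} [Fintype α] [DecidableEq α] [Fintype β] [DecidableEq β]
    (μ : Ω → ℝ) (X : Ω → α) (Y : Ω → β) : ℝ :=
  entropy μ X + entropy μ Y - entropy μ (fun ω => (X ω, Y ω))

/-- Conditional Shannon entropy H(X | Y) = H(X,Y) − H(Y). -/
noncomputable def condEntropy {Ω : Type*} [Fintype Ω]
    {α β : Type*} [Fintype α] [DecidableEq α] [Fintype β] [DecidableEq β]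
    (μ : Ω → ℝ) (X : Ω → α) (Y : Ω → β) : ℝ :=
  entropy μ (fun ω => (X ω, Y ω)) - entropy μ Y

/-- The joint random variable formed by tupling the variables `B i` for `i ∈ S`. -/
def joint {Ω α : Type*} {M : ℕ} (B : Fin M → Ω → α) (S : Finset (Fin M)) :
    Ω → (S → α) :=
  fun ω i => B i ω

open Real

lemma mul_neg_log_le_negMulLog {x p : ℝ} (hx : 0 ≤ x) (hxp : x ≤ p) :
    x * -log p ≤ negMulLog x := by
  rcases hx.eq_or_lt with rfl | hx
  · simp
  · rw [negMulLog, mul_neg, neg_mul, neg_le_neg_iff]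
    exact mul_le_mul_of_nonneg_left (log_le_log hx hxp) hx.le

lemma sum_mul_neg_log_le_sum_negMulLog {ι : Type*} (s : Finset ι) {w : ι → ℝ} {p : ℝ}
    (hw : ∀ i ∈ s, 0 ≤ w i) (hwp : ∀ i ∈ s, w i ≤ p) :
    (∑ i ∈ s, w i) * -log p ≤ ∑ i ∈ s, negMulLog (w i) := by
  rw [sum_mul]
  exact sum_le_sum fun i hi => mul_neg_log_le_negMulLog (hw i hi) (hwp i hi)

lemma two_mul_one_sub_mul_log_two_le_neg_log {p : ℝ} (hp : 0 < p) (hp2 : p ≤ 1 / 2) :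
    2 * (1 - p) * log 2 ≤ -log p := by
  have h2p : log (2 * p) ≤ 2 * p - 1 := log_le_sub_one_of_pos (by positivity)
  rw [log_mul two_ne_zero hp.ne'] at h2p
  -- the gap is `(1 - log 2) * (1 - 2 * p) ≥ 0`
  nlinarith [log_two_lt_d9]

lemma two_mul_one_sub_mul_log_two_le_binEntropy {p : ℝ} (hp : 1 / 2 ≤ p) (hp1 : p ≤ 1) :
    2 * (1 - p) * log 2 ≤ binEntropy p := by
  have hchord := strictConcave_binEntropy.concaveOn.2
    (show (2⁻¹ : ℝ) ∈ Set.Icc 0 1 by norm_num) (show (1 : ℝ) ∈ Set.Icc 0 1 by norm_num)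
    (show 0 ≤ 2 * (1 - p) by linarith) (show 0 ≤ 2 * p - 1 by linarith) (by ring)
  have hp' : (2 * (1 - p)) • (2⁻¹ : ℝ) + (2 * p - 1) • (1 : ℝ) = p := by
    simp only [smul_eq_mul]; ring
  rwa [hp', binEntropy_two_inv, binEntropy_one, smul_eq_mul, smul_zero, add_zero] at hchord

lemma two_mul_one_sub_max_mul_log_two_le_sum_negMulLog {ι : Type*} [Fintype ι]
    {w : ι → ℝ} (hw : ∀ i, 0 ≤ w i) (hw1 : ∑ i, w i = 1) {i₀ : ι} (hmax : ∀ i, w i ≤ w i₀) :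
    2 * (1 - w i₀) * log 2 ≤ ∑ i, negMulLog (w i) := by
  classical
  set p := w i₀
  rcases le_or_gt p (1 / 2) with hp | hp
  · have hp0 : 0 < p := by
      by_contra! hp0
      have : ∑ i, w i ≤ 0 := sum_nonpos fun i _ => (hmax i).trans hp0
      linarith
    calc 2 * (1 - p) * log 2 ≤ -log p := two_mul_one_sub_mul_log_two_le_neg_log hp0 hp
      _ = (∑ i, w i) * -log p := by rw [hw1, one_mul]
      _ ≤ ∑ i, negMulLog (w i) :=
        sum_mul_neg_log_le_sum_negMulLog _ (fun i _ => hw i) fun i _ => hmax i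
  · have hrest : ∑ i ∈ univ.erase i₀, w i = 1 - p := by
      rw [← hw1, ← add_sum_erase univ w (mem_univ i₀)]; ring
    have hp1 : p ≤ 1 := by linarith [sum_nonneg fun i (_ : i ∈ univ.erase i₀) => hw i]
    -- every class other than `i₀` has weight at most `1 - p`, so `H(w) ≥ h(p)`
    calc 2 * (1 - p) * log 2 ≤ binEntropy p :=
          two_mul_one_sub_mul_log_two_le_binEntropy hp.le hp1
      _ = negMulLog p + (∑ i ∈ univ.erase i₀, w i) * -log (1 - p) := by
        rw [binEntropy_eq_negMulLog_add_negMulLog_one_sub, hrest]; simp only [negMulLog]; ring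
      _ ≤ negMulLog p + ∑ i ∈ univ.erase i₀, negMulLog (w i) :=
        add_le_add le_rfl (sum_mul_neg_log_le_sum_negMulLog _ (fun i _ => hw i)
          fun i hi => hrest ▸ single_le_sum (fun j _ => hw j) hi)
      _ = ∑ i, negMulLog (w i) := add_sum_erase _ (fun i => negMulLog (w i)) (mem_univ i₀)

lemma two_mul_sum_sub_max_mul_log_two_le_sum_negMulLog_sub {ι : Type*} [Fintype ι]
    {v : ι → ℝ} (hv : ∀ i, 0 ≤ v i) {i₀ : ι} (hmax : ∀ i, v i ≤ v i₀) :
    2 * (∑ i, v i - v i₀) * log 2 ≤ ∑ i, negMulLog (v i) - negMulLog (∑ i, v i) := by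
  set s := ∑ i, v i
  rcases (sum_nonneg fun i _ => hv i : 0 ≤ s).eq_or_lt with hs | hs
  · have hv0 : ∀ i, v i = 0 := fun i =>
      (sum_eq_zero_iff_of_nonneg fun i _ => hv i).1 hs.symm i (mem_univ i)
    simp [s, hv0]
  · have hs0 : s ≠ 0 := hs.ne'
    have hscale : ∑ i, negMulLog (v i) - negMulLog s = s * ∑ i, negMulLog (v i / s) := by
      have hv : ∀ i, negMulLog (v i) = v i / s * negMulLog s + s * negMulLog (v i / s) :=
        fun i => by rw [← negMulLog_mul, mul_div_cancel₀ _ hs0]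
      simp_rw [hv]
      rw [sum_add_distrib, ← sum_mul, ← sum_div, div_self hs0, one_mul, ← mul_sum]
      ring
    have hnorm := two_mul_one_sub_max_mul_log_two_le_sum_negMulLog
      (fun i => div_nonneg (hv i) hs.le) (by rw [← sum_div, div_self hs0])
      fun i => div_le_div_of_nonneg_right (hmax i) hs.le
    calc 2 * (s - v i₀) * log 2 = s * (2 * (1 - v i₀ / s) * log 2) := by field_simp
      _ ≤ s * ∑ i, negMulLog (v i / s) := mul_le_mul_of_nonneg_left hnorm hs.le
      _ = _ := hscale.symm

section
variable {Ω α β : Type*} [Fintype Ω] [DecidableEq α] [DecidableEq β] (μ : Ω → ℝ)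

lemma pr_nonneg (hμ : ∀ ω, 0 ≤ μ ω) (X : Ω → α) (a : α) : 0 ≤ pr μ X a :=
  sum_nonneg fun ω _ => by split_ifs <;> simp [hμ ω]

lemma sum_pr_prod_mk [Fintype β] (X : Ω → α) (Y : Ω → β) (a : α) :
    ∑ b, pr μ (fun ω => (X ω, Y ω)) (a, b) = pr μ X a := by
  unfold pr
  rw [sum_comm]
  refine sum_congr rfl fun ω _ => ?_
  by_cases h : X ω = a <;> simp [h, Prod.ext_iff]

lemma sum_ite_ne_eq_sum_pr_sub_pr_prod [Fintype α] (X : Ω → α) (Y : Ω → β) (g : α → β) :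
    (∑ ω, if g (X ω) ≠ Y ω then μ ω else 0) =
      ∑ a, (pr μ X a - pr μ (fun ω => (X ω, Y ω)) (a, g a)) := by
  unfold pr
  simp only [← sum_sub_distrib]
  rw [sum_comm]
  refine sum_congr rfl fun ω _ => ?_
  rw [sum_sub_distrib]
  by_cases h : g (X ω) = Y ω <;> simp [h, Prod.ext_iff, ite_and, eq_comm (a := Y ω)]

lemma entropy_eq_sum_negMulLog [Fintype α] (X : Ω → α) :
    entropy μ X = (∑ a, negMulLog (pr μ X a)) / log 2 := by
  simp only [entropy, logb, negMulLog, sum_div]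
  congr 1; ext; ring

lemma entropy_sub_mutualInfo_eq_sum [Fintype α] [Fintype β] (X : Ω → α) (Y : Ω → β) :
    entropy μ Y - mutualInfo μ X Y =
      (∑ a, (∑ b, negMulLog (pr μ (fun ω => (X ω, Y ω)) (a, b)) - negMulLog (pr μ X a))) /
        log 2 := by
  rw [mutualInfo, entropy_eq_sum_negMulLog, entropy_eq_sum_negMulLog, entropy_eq_sum_negMulLog,
    Fintype.sum_prod_type, sum_sub_distrib]
  ring

end

/-- Hellman–Raviv bound: the Bayes error of predicting the class C from the code B is
at most (H(C) − I(B;C))/2, i.e. some classifier g achieves error ≤ H(C|B)/2. -/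
theorem bayes_error_le_hellman_raviv {Ω : Type*} [Fintype Ω]
    {β γ : Type*} [Fintype β] [DecidableEq β] [Fintype γ] [DecidableEq γ]
    (μ : Ω → ℝ) (hμ : ∀ ω, 0 ≤ μ ω) (hμ1 : ∑ ω, μ ω = 1)
    (B : Ω → β) (C : Ω → γ) :
    ∃ g : β → γ,
      (∑ ω, if g (B ω) ≠ C ω then μ ω else 0)
        ≤ (entropy μ C - mutualInfo μ B C) / 2 := by
  obtain ⟨ω, -⟩ := nonempty_of_sum_ne_zero (hμ1.trans_ne one_ne_zero)
  have : Nonempty γ := ⟨C ω⟩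
  choose g hg using fun b => Finite.exists_max fun c => pr μ (fun ω => (B ω, C ω)) (b, c)
  refine ⟨g, ?_⟩
  rw [sum_ite_ne_eq_sum_pr_sub_pr_prod, entropy_sub_mutualInfo_eq_sum, div_div, sum_div]
  refine sum_le_sum fun b _ => ?_
  rw [le_div_iff₀ (by positivity), ← sum_pr_prod_mk μ B C b]
  have hbound :=
    two_mul_sum_sub_max_mul_log_two_le_sum_negMulLog_sub (fun c => pr_nonneg μ hμ _ _) (hg b)
  linarith
end

section
/- For random variables B, b*, and a collection 𝓑 with b* ∈ 𝓑 \ B, the marginal gain of adding b* to B in the mutual-information objective satisfies I(B ∪ {b*}; 𝓑 \ (B ∪ {b*})) − I(B; 𝓑 \ B) = H(b* | B) − H(b* | 𝓑 \ (B ∪ {b*})). -/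
open Finset

lemma entropy_comp_inj {Ω : Type*} [Fintype Ω] {α β : Type*} [Fintype α] [DecidableEq α]
    [Fintype β] [DecidableEq β] (μ : Ω → ℝ) (X : Ω → α) (f : α → β) (hf : Function.Injective f) :
    entropy μ (fun ω => f (X ω)) = entropy μ X := by
  unfold entropy
  rw [← Finset.sum_subset (Finset.subset_univ (Finset.image f Finset.univ))]
  · rw [Finset.sum_image (fun a _ b _ h => hf h)]
    refine Finset.sum_congr rfl fun a _ => ?_
    have : pr μ (fun ω => f (X ω)) (f a) = pr μ X a := by
      unfold pr
      refine Finset.sum_congr rfl fun ω _ => ?_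
      simp [hf.eq_iff]
    rw [this]
  · intro b _ hb
    have : pr μ (fun ω => f (X ω)) b = 0 := by
      unfold pr
      refine Finset.sum_eq_zero fun ω _ => ?_
      have : f (X ω) ≠ b := by
        intro h; exact hb (Finset.mem_image.2 ⟨X ω, Finset.mem_univ _, h⟩)
      simp [this]
    simp [this]

lemma entropy_congr {Ω : Type*} [Fintype Ω] {α β : Type*} [Fintype α] [DecidableEq α]
    [Fintype β] [DecidableEq β] (μ : Ω → ℝ) (X : Ω → α) (Y : Ω → β)
    (g : α → β) (hg : ∀ ω, Y ω = g (X ω)) (h : β → α) (hh : ∀ ω, X ω = h (Y ω)) :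
    entropy μ X = entropy μ Y := by
  have e1 : entropy μ (fun ω => (X ω, Y ω)) = entropy μ X := by
    have : (fun ω => (X ω, Y ω)) = fun ω => ((fun a => (a, g a)) (X ω)) := by
      funext ω; simp [hg ω]
    rw [this]
    exact entropy_comp_inj μ X (fun a => (a, g a)) (fun a b hab => congrArg Prod.fst hab)
  have e2 : entropy μ (fun ω => (Y ω, X ω)) = entropy μ Y := by
    have : (fun ω => (Y ω, X ω)) = fun ω => ((fun b => (b, h b)) (Y ω)) := by
      funext ω; simp [hh ω]
    rw [this]
    exact entropy_comp_inj μ Y (fun b => (b, h b)) (fun a b hab => congrArg Prod.fst hab)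
  have e3 : entropy μ (fun ω => (X ω, Y ω)) = entropy μ (fun ω => (Y ω, X ω)) := by
    have : (fun ω => (Y ω, X ω)) = fun ω => Prod.swap ((fun ω => (X ω, Y ω)) ω) := rfl
    rw [this]
    exact (entropy_comp_inj μ (fun ω => (X ω, Y ω)) Prod.swap Prod.swap_injective).symm
  rw [← e1, e3, e2]

lemma entropy_joint_pair {Ω : Type*} [Fintype Ω] {α : Type*} [Fintype α] [DecidableEq α]
    {M : ℕ} (μ : Ω → ℝ) (B : Fin M → Ω → α) (U V : Finset (Fin M)) :
    entropy μ (fun ω => (joint B U ω, joint B V ω)) = entropy μ (joint B (U ∪ V)) := by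
  refine entropy_congr μ _ _
    (fun p => fun j => if h : (j : Fin M) ∈ U then p.1 ⟨j, h⟩ else
      p.2 ⟨j, (Finset.mem_union.1 j.2).resolve_left h⟩) ?_
    (fun f => (fun j => f ⟨j, Finset.mem_union_left _ j.2⟩,
               fun j => f ⟨j, Finset.mem_union_right _ j.2⟩)) ?_
  · intro ω; funext j; by_cases h : (j : Fin M) ∈ U <;> simp [joint, h]
  · intro ω; rfl

lemma entropy_single_pair {Ω : Type*} [Fintype Ω] {α : Type*} [Fintype α] [DecidableEq α]
    {M : ℕ} (μ : Ω → ℝ) (B : Fin M → Ω → α) (i : Fin M) (V : Finset (Fin M)) :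
    entropy μ (fun ω => (B i ω, joint B V ω)) = entropy μ (joint B (insert i V)) := by
  refine entropy_congr μ _ _
    (fun p => fun j => if h : (j : Fin M) ∈ V then p.2 ⟨j, h⟩ else p.1) ?_
    (fun f => (f ⟨i, Finset.mem_insert_self i V⟩,
               fun j => f ⟨j, Finset.mem_insert_of_mem j.2⟩)) ?_
  · intro ω; funext j
    by_cases h : (j : Fin M) ∈ V
    · simp [joint, h]
    · have : (j : Fin M) = i := ((Finset.mem_insert.1 j.2).resolve_right h)
      simp [joint, h, this]
  · intro ω; rfl

/-- The marginal gain of adding the code block b* = B i to the selected set B_S in the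
mutual-information objective equals H(b* | B_S) − H(b* | B_{(S∪{i})ᶜ}). -/
theorem mutualInfo_marginal_gain {Ω : Type*} [Fintype Ω]
    {α : Type*} [Fintype α] [DecidableEq α] {M : ℕ}
    (μ : Ω → ℝ) (hμ : ∀ ω, 0 ≤ μ ω) (hμ1 : ∑ ω, μ ω = 1)
    (B : Fin M → Ω → α) (S : Finset (Fin M)) (i : Fin M) (hi : i ∉ S) :
    mutualInfo μ (joint B (insert i S)) (joint B (insert i S)ᶜ)
      - mutualInfo μ (joint B S) (joint B Sᶜ)
    = condEntropy μ (B i) (joint B S)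
      - condEntropy μ (B i) (joint B (insert i S)ᶜ) := by
  unfold mutualInfo condEntropy
  rw [entropy_joint_pair, entropy_joint_pair, entropy_single_pair, entropy_single_pair]
  rw [Finset.union_compl, Finset.union_compl]
  have h1 : insert i (insert i S)ᶜ = Sᶜ := by
    ext j
    simp only [Finset.mem_insert, Finset.mem_compl]
    constructor
    · rintro (rfl | h)
      · exact hi
      · intro hj; exact h (Or.inr hj)
    · intro h
      by_cases hji : j = i
      · exact Or.inl hji
      · exact Or.inr (by simp [hji, h])
  rw [h1]
  ring
end
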